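/- arXiv:2110.15304 — 4 statements merged into one kernel-verified Lean document; each statement's English description precedes it below -/
import Mathlib

section
/- For any non-decreasing functions ℓ : ℕ → ℕ_{≥2} ∪ {∞} and c : ℕ → ℕ ∪ {∞}, the two complexity exponents coincide: γ*(ℓ,c) = γ◇(ℓ,c). -/
open MeasureTheory Filter
open scoped ENNReal NNReal Classical

noncomputable section

/-- The ReLU activation function. -/
def relu (x : ℝ) : ℝ := max 0 x

/-- A (ReLU) neural network with input dimension `d` and output dimension `1` is encoded by
its number of layers `L ≥ 1`, its widths `N` (with `N 0 = d` and `N L = 1`),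
its matrices `A ℓ` and bias vectors `b ℓ` (only the values for `ℓ < L` are relevant). -/
structure NeuralNet (d : ℕ) where
  L : ℕ
  hL : 0 < L
  N : ℕ → ℕ
  hN0 : N 0 = d
  hNL : N L = 1
  A : ∀ ℓ : ℕ, Matrix (Fin (N (ℓ + 1))) (Fin (N ℓ)) ℝ
  b : ∀ ℓ : ℕ, Fin (N (ℓ + 1)) → ℝ

namespace NeuralNet

variable {d : ℕ}

/-- The vector of values computed in the `k`-th layer, with ReLU applied after
each affine map. -/
def hidden (Φ : NeuralNet d) : (k : ℕ) → (Fin d → ℝ) → Fin (Φ.N k) → ℝ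
  | 0, x => x ∘ Fin.cast Φ.hN0
  | k + 1, x => fun i => relu ((Φ.A k).mulVec (Φ.hidden k x) i + Φ.b k i)

/-- The realization `R_ρ Φ` of the network: the last affine map is applied
without the ReLU activation. -/
def realization (Φ : NeuralNet d) (x : Fin d → ℝ) : ℝ :=
  ((Φ.A (Φ.L - 1)).mulVec (Φ.hidden (Φ.L - 1) x) + Φ.b (Φ.L - 1))
    (Fin.cast (show (1 : ℕ) = Φ.N (Φ.L - 1 + 1) by
      rw [Nat.sub_add_cancel Φ.hL, Φ.hNL]) 0)

/-- `W(Φ)`: the number of nonzero weights (entries of the matrices and bias vectors). -/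
def weightCount (Φ : NeuralNet d) : ℕ :=
  ∑ ℓ ∈ Finset.range Φ.L,
    ((Finset.univ.filter fun ij : Fin (Φ.N (ℓ + 1)) × Fin (Φ.N ℓ) => Φ.A ℓ ij.1 ij.2 ≠ 0).card
      + (Finset.univ.filter fun i : Fin (Φ.N (ℓ + 1)) => Φ.b ℓ i ≠ 0).card)

/-- `‖Φ‖_NN ≤ C`: all entries of all matrices and bias vectors are bounded by `C` in
absolute value. -/
def weightsBoundedBy (Φ : NeuralNet d) (C : ℝ≥0∞) : Prop :=
  ∀ ℓ < Φ.L, (∀ i j, ENNReal.ofReal |Φ.A ℓ i j| ≤ C) ∧ (∀ i, ENNReal.ofReal |Φ.b ℓ i| ≤ C)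

end NeuralNet

/-- `Σ_n`: the set of realizations of networks with input dimension `d`, output dimension 1,
at most `n` nonzero weights, at most `ℓf n` layers, and weights bounded by `cf n`. -/
def NNSet (d : ℕ) (ℓf : ℕ → ℕ∞) (cf : ℕ → ℝ≥0∞) (n : ℕ) : Set ((Fin d → ℝ) → ℝ) :=
  { F | ∃ Φ : NeuralNet d, F = Φ.realization ∧ Φ.weightCount ≤ n ∧
      (Φ.L : ℕ∞) ≤ ℓf n ∧ Φ.weightsBoundedBy (cf n) }

/-- The unit cube `[0,1]^d`. -/
def unitCube (d : ℕ) : Set (Fin d → ℝ) := Set.Icc 0 1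

/-- `d_p(f, S)`: the `L^p(Ω)` distance of `f` to the set `S`. -/
def dLp (d : ℕ) (Ω : Set (Fin d → ℝ)) (p : ℝ≥0∞) (f : (Fin d → ℝ) → ℝ)
    (S : Set ((Fin d → ℝ) → ℝ)) : ℝ≥0∞ :=
  ⨅ g ∈ S, eLpNorm (f - g) p (volume.restrict Ω)

/-- `Γ(f) = max (‖f‖_{L^p(Ω)}) (sup_{n ≥ 1} n^α d_p(f, Σ_n))`. -/
def Gamma (d : ℕ) (ℓf : ℕ → ℕ∞) (cf : ℕ → ℝ≥0∞) (Ω : Set (Fin d → ℝ)) (p : ℝ≥0∞) (α : ℝ)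
    (f : (Fin d → ℝ) → ℝ) : ℝ≥0∞ :=
  max (eLpNorm f p (volume.restrict Ω))
    (⨆ n : ℕ, ((n + 1 : ℕ) : ℝ≥0∞) ^ α * dLp d Ω p f (NNSet d ℓf cf (n + 1)))

/-- The approximation space quasi-norm `‖f‖_{A^α_{ℓ,c,p}(Ω)} = inf {θ > 0 : Γ(f/θ) ≤ 1}`,
with value `∞` (`sInf ∅`) if no such `θ` exists. -/
def ANorm (d : ℕ) (ℓf : ℕ → ℕ∞) (cf : ℕ → ℝ≥0∞) (Ω : Set (Fin d → ℝ)) (p : ℝ≥0∞) (α : ℝ)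
    (f : (Fin d → ℝ) → ℝ) : ℝ≥0∞ :=
  sInf {t : ℝ≥0∞ | ∃ θ : ℝ, 0 < θ ∧ t = ENNReal.ofReal θ ∧
    Gamma d ℓf cf Ω p α (fun x => f x / θ) ≤ 1}

/-- Membership in the approximation space `A^α_{ℓ,c,p}(Ω)`:
`f ∈ L^p(Ω)` and `‖f‖_{A^α_{ℓ,c,p}} < ∞`. -/
def MemA (d : ℕ) (ℓf : ℕ → ℕ∞) (cf : ℕ → ℝ≥0∞) (Ω : Set (Fin d → ℝ)) (p : ℝ≥0∞) (α : ℝ)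
    (f : (Fin d → ℝ) → ℝ) : Prop :=
  MemLp f p (volume.restrict Ω) ∧ ANorm d ℓf cf Ω p α f < ⊤

/-- `ℓ* = sup_n ℓ(n)`. -/
def lstar (ℓf : ℕ → ℕ∞) : ℕ∞ := ⨆ n : ℕ, ℓf n

/-- `γ*(ℓ,c)`. -/
def gammaStar (ℓf : ℕ → ℕ∞) (cf : ℕ → ℝ≥0∞) : ℝ≥0∞ :=
  sSup {t : ℝ≥0∞ | ∃ γ : ℝ, 0 ≤ γ ∧ t = ENNReal.ofReal γ ∧
    ∃ L : ℕ, 1 ≤ L ∧ (L : ℕ∞) ≤ lstar ℓf ∧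
      0 < Filter.limsup
        (fun n : ℕ => cf n ^ L * (n : ℝ≥0∞) ^ (L / 2) / (n : ℝ≥0∞) ^ (γ : ℝ))
        Filter.atTop}

/-- `γ◇(ℓ,c)`. -/
def gammaDiamond (ℓf : ℕ → ℕ∞) (cf : ℕ → ℝ≥0∞) : ℝ≥0∞ :=
  sInf {t : ℝ≥0∞ | ∃ γ : ℝ, 0 ≤ γ ∧ t = ENNReal.ofReal γ ∧
    ∃ C : ℝ, 0 < C ∧ ∀ n : ℕ, 1 ≤ n → ∀ L : ℕ, 1 ≤ L → (L : ℕ∞) ≤ lstar ℓf →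
      cf n ^ L * (n : ℝ≥0∞) ^ (L / 2) ≤ ENNReal.ofReal C * (n : ℝ≥0∞) ^ (γ : ℝ)}

/-- The Hölder seminorm `Lip_β(f)` on the unit cube, with respect to the `ℓ∞` metric
(which is the metric of `Fin d → ℝ`), valued in `[0,∞]`. -/
def eLip (d : ℕ) (β : ℝ) (f : (Fin d → ℝ) → ℝ) : ℝ≥0∞ :=
  ⨆ x ∈ unitCube d, ⨆ y ∈ unitCube d, ⨆ _ : x ≠ y,
    ENNReal.ofReal (|f x - f y| / dist x y ^ β)

/-- The supremum norm over the unit cube, valued in `[0,∞]`. -/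
def supNormCube (d : ℕ) (f : (Fin d → ℝ) → ℝ) : ℝ≥0∞ :=
  ⨆ x ∈ unitCube d, ENNReal.ofReal |f x|

/-- The Hölder norm `‖f‖_{C^{0,β}} = ‖f‖_{L∞} + Lip_β(f)`, valued in `[0,∞]`. -/
def holderNorm (d : ℕ) (β : ℝ) (f : (Fin d → ℝ) → ℝ) : ℝ≥0∞ :=
  supNormCube d f + eLip d β f

/-- `d/p`, interpreted as `0` when `p = ∞`. -/
def dOverP (d : ℕ) (p : ℝ≥0∞) : ℝ := if p = ⊤ then 0 else (d : ℝ) / p.toReal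

/-- The function `ζ_{M'}(x) = max {0, 1 - M' * ∑ i, x i}`. -/
def zeta (d : ℕ) (M' : ℝ) (x : Fin d → ℝ) : ℝ := max 0 (1 - M' * ∑ i, x i)

/-- Piecewise constant interpolation of `f` on the tensor grid `{0, 1/n, …, n/n}^d`,
constant on the cells `(i_1/n, …, i_d/n) + [0, 1/n)^d`. -/
def pwConstGrid (d n : ℕ) (f : (Fin d → ℝ) → ℝ) (x : Fin d → ℝ) : ℝ :=
  ∑ i : Fin d → Fin (n + 1),
    if ∀ j, ((i j : ℝ) / n ≤ x j ∧ x j < (i j : ℝ) / n + 1 / n) then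
      f (fun j => (i j : ℝ) / n) else 0

/-- The piecewise constant interpolation operator `A_m^{pw-const}`,
using the grid with `n = ⌊m^{1/d}⌋ - 1`. -/
def pwConst (d m : ℕ) (f : (Fin d → ℝ) → ℝ) : (Fin d → ℝ) → ℝ :=
  pwConstGrid d (Nat.floor ((m : ℝ) ^ ((d : ℝ)⁻¹)) - 1) f

end

/-!
If `ℓ* < ∞` there are only finitely many depths `L`, and a sequence that is finite for `n ≥ 1` and
satisfies `a n / n ^ γ → 0` is bounded by `C * n ^ γ` for all `n ≥ 1`; hence every `γ > γ*` is
admissible for `γ◇`. Otherwise `γ* = ∞`: if `ℓ* = ∞`, because `c(n) ^ L * n ^ ⌊L/2⌋ ≥ n ^ ⌊L/2⌋`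
outgrows every power of `n`; if some `c(n) ^ L * n ^ ⌊L/2⌋` is infinite, because by monotonicity of
`c` so are all later terms. The inequality `γ* ≤ γ◇` holds without any assumption.
-/

open Topology

namespace ENNReal

lemma one_le_natCast_rpow {n : ℕ} (hn : 1 ≤ n) {γ : ℝ} (hγ : 0 ≤ γ) :
    1 ≤ (n : ℝ≥0∞) ^ γ := by
  simpa using rpow_le_rpow_of_exponent_le (Nat.one_le_cast.2 hn) hγ

lemma tendsto_natCast_rpow_neg_atTop {δ : ℝ} (hδ : 0 < δ) :
    Tendsto (fun n : ℕ => (n : ℝ≥0∞) ^ (-δ)) atTop (𝓝 0) := by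
  simpa only [rpow_neg, inv_top, Function.comp_def] using
    ((tendsto_rpow_at_top hδ).comp tendsto_nat_nhds_top).inv

lemma limsup_div_natCast_rpow_eq_zero {f : ℕ → ℝ≥0∞} {C : ℝ≥0∞} (hC : C ≠ ⊤) {γ γ' : ℝ}
    (hγ : γ' < γ) (hf : ∀ n, 1 ≤ n → f n ≤ C * (n : ℝ≥0∞) ^ γ') :
    limsup (fun n : ℕ => f n / (n : ℝ≥0∞) ^ γ) atTop = 0 := by
  have hbound : ∀ᶠ n : ℕ in atTop,
      f n / (n : ℝ≥0∞) ^ γ ≤ C * (n : ℝ≥0∞) ^ (-(γ - γ')) := by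
    filter_upwards [eventually_ge_atTop 1] with n hn
    refine div_le_of_le_mul ?_
    rw [mul_assoc, ← rpow_add _ _ (Nat.cast_ne_zero.2 (by omega)) (natCast_ne_top n)]
    simpa using hf n hn
  have hlim : Tendsto (fun n : ℕ => C * (n : ℝ≥0∞) ^ (-(γ - γ'))) atTop (𝓝 0) := by
    simpa using
      ENNReal.Tendsto.const_mul (tendsto_natCast_rpow_neg_atTop (sub_pos.2 hγ)) (Or.inr hC)
  exact le_antisymm ((limsup_le_limsup hbound).trans_eq hlim.limsup_eq) zero_le

lemma eventually_forall_le_mul_natCast_rpow {f : ℕ → ℝ≥0∞} {γ : ℝ} (hγ : 0 ≤ γ)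
    (hf : ∀ n, 1 ≤ n → f n ≠ ⊤) (h : limsup (fun n : ℕ => f n / (n : ℝ≥0∞) ^ γ) atTop < ⊤) :
    ∀ᶠ C : ℝ≥0 in atTop, ∀ n, 1 ≤ n → f n ≤ C * (n : ℝ≥0∞) ^ γ := by
  obtain ⟨B, hB, -⟩ := lt_iff_exists_nnreal_btwn.1 h
  obtain ⟨N, hN⟩ := eventually_atTop.1 (eventually_lt_of_limsup_lt hB)
  set M := ∑ n ∈ Finset.Icc 1 N, f n
  have hM : M ≠ ⊤ := sum_ne_top.2 fun n hn => hf n (Finset.mem_Icc.1 hn).1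
  filter_upwards [eventually_ge_atTop (max B M.toNNReal)] with C hC n hn
  have hpow : 1 ≤ (n : ℝ≥0∞) ^ γ := one_le_natCast_rpow hn hγ
  rcases le_total N n with hNn | hnN
  · calc f n ≤ B * (n : ℝ≥0∞) ^ γ :=
          (ENNReal.div_le_iff_le_mul (Or.inr coe_ne_top)
            (Or.inl (rpow_ne_top_of_nonneg hγ (natCast_ne_top n)))).1 (hN n hNn).le
      _ ≤ C * (n : ℝ≥0∞) ^ γ := by gcongr; exact le_max_left _ _ |>.trans hC
  · calc f n ≤ M := Finset.single_le_sum (fun _ _ => zero_le) (Finset.mem_Icc.2 ⟨hn, hnN⟩)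
      _ = M.toNNReal := (coe_toNNReal hM).symm
      _ ≤ C := coe_le_coe.2 (le_max_right _ _ |>.trans hC)
      _ ≤ C * (n : ℝ≥0∞) ^ γ := le_mul_of_one_le_right zero_le hpow

end ENNReal

section Exponents

variable {ℓf : ℕ → ℕ∞} {c : ℕ → ℝ≥0∞}

lemma ofReal_le_gammaStar {γ : ℝ} (hγ : 0 ≤ γ) {L : ℕ} (hL : 1 ≤ L) (hLℓ : (L : ℕ∞) ≤ lstar ℓf)
    (h : 0 < limsup (fun n : ℕ => c n ^ L * (n : ℝ≥0∞) ^ (L / 2) / (n : ℝ≥0∞) ^ γ) atTop) :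
    ENNReal.ofReal γ ≤ gammaStar ℓf c :=
  le_sSup ⟨γ, hγ, rfl, L, hL, hLℓ, h⟩

lemma gammaDiamond_le_ofReal {γ : ℝ} (hγ : 0 ≤ γ) {C : ℝ} (hC : 0 < C)
    (h : ∀ n : ℕ, 1 ≤ n → ∀ L : ℕ, 1 ≤ L → (L : ℕ∞) ≤ lstar ℓf →
      c n ^ L * (n : ℝ≥0∞) ^ (L / 2) ≤ ENNReal.ofReal C * (n : ℝ≥0∞) ^ γ) :
    gammaDiamond ℓf c ≤ ENNReal.ofReal γ :=
  sInf_le ⟨γ, hγ, rfl, C, hC, h⟩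

theorem gammaStar_le_gammaDiamond : gammaStar ℓf c ≤ gammaDiamond ℓf c := by
  refine sSup_le fun _ ⟨γ, hγ, ht, L, hL, hLℓ, hpos⟩ => le_sInf fun _ ⟨γ', _, hs, C, _, hC⟩ => ?_
  subst ht hs
  refine ENNReal.ofReal_le_ofReal (not_lt.1 fun hlt => hpos.ne' ?_)
  exact ENNReal.limsup_div_natCast_rpow_eq_zero ENNReal.ofReal_ne_top hlt
    fun n hn => hC n hn L hL hLℓ

lemma gammaStar_eq_top_of_forall_eventually_rpow_le
    (h : ∀ γ : ℝ, 0 ≤ γ → ∃ L : ℕ, 1 ≤ L ∧ (L : ℕ∞) ≤ lstar ℓf ∧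
      ∀ᶠ n : ℕ in atTop, (n : ℝ≥0∞) ^ γ ≤ c n ^ L * (n : ℝ≥0∞) ^ (L / 2)) :
    gammaStar ℓf c = ⊤ := by
  refine ENNReal.eq_top_of_forall_nnreal_le fun r => ?_
  obtain ⟨L, hL, hLℓ, hdom⟩ := h r r.2
  rw [← ENNReal.ofReal_coe_nnreal]
  refine ofReal_le_gammaStar r.2 hL hLℓ (zero_lt_one.trans_le (le_limsup_of_frequently_le ?_))
  refine (hdom.and (eventually_ge_atTop 1)).frequently.mono fun n ⟨hn, hn1⟩ => ?_
  have hpow := ENNReal.one_le_natCast_rpow hn1 r.2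
  refine (ENNReal.le_div_iff_mul_le (Or.inl (one_pos.trans_le hpow).ne')
    (Or.inl (ENNReal.rpow_ne_top_of_nonneg r.2 (ENNReal.natCast_ne_top n)))).2 ?_
  rwa [one_mul]

lemma gammaStar_eq_top_of_lstar_eq_top (hc : ∀ n, 1 ≤ c n) (hℓ : lstar ℓf = ⊤) :
    gammaStar ℓf c = ⊤ := by
  refine gammaStar_eq_top_of_forall_eventually_rpow_le fun γ _ => ?_
  refine ⟨2 * ⌈γ⌉₊ + 2, by omega, hℓ ▸ le_top, ?_⟩
  filter_upwards [eventually_ge_atTop 1] with n hn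
  calc (n : ℝ≥0∞) ^ γ ≤ (n : ℝ≥0∞) ^ (((2 * ⌈γ⌉₊ + 2) / 2 : ℕ) : ℝ) := by
        refine ENNReal.rpow_le_rpow_of_exponent_le (Nat.one_le_cast.2 hn) ?_
        rw [show (2 * ⌈γ⌉₊ + 2) / 2 = ⌈γ⌉₊ + 1 by omega]
        push_cast
        linarith [Nat.le_ceil γ]
    _ = (n : ℝ≥0∞) ^ ((2 * ⌈γ⌉₊ + 2) / 2) := ENNReal.rpow_natCast _ _
    _ ≤ c n ^ (2 * ⌈γ⌉₊ + 2) * (n : ℝ≥0∞) ^ ((2 * ⌈γ⌉₊ + 2) / 2) :=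
        le_mul_of_one_le_left zero_le (one_le_pow₀ (hc n))

lemma gammaStar_eq_top_of_eq_top (hc : Monotone c) {L n : ℕ} (hL : 1 ≤ L)
    (hLℓ : (L : ℕ∞) ≤ lstar ℓf) (htop : c n ^ L * (n : ℝ≥0∞) ^ (L / 2) = ⊤) :
    gammaStar ℓf c = ⊤ := by
  refine gammaStar_eq_top_of_forall_eventually_rpow_le fun _ _ => ⟨L, hL, hLℓ, ?_⟩
  filter_upwards [eventually_ge_atTop n] with m hm
  calc _ ≤ c n ^ L * (n : ℝ≥0∞) ^ (L / 2) := htop ▸ le_top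
    _ ≤ c m ^ L * (m : ℝ≥0∞) ^ (L / 2) := by gcongr; exact hc hm

lemma gammaDiamond_le_of_gammaStar_lt (hℓ : lstar ℓf ≠ ⊤)
    (hfin : ∀ n : ℕ, 1 ≤ n → ∀ L : ℕ, 1 ≤ L → (L : ℕ∞) ≤ lstar ℓf →
      c n ^ L * (n : ℝ≥0∞) ^ (L / 2) ≠ ⊤)
    {γ : ℝ} (hγ : 0 ≤ γ) (h : gammaStar ℓf c < ENNReal.ofReal γ) :
    gammaDiamond ℓf c ≤ ENNReal.ofReal γ := by
  obtain ⟨K, hK⟩ := ENat.ne_top_iff_exists.1 hℓ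
  have hbound : ∀ᶠ C : ℝ≥0 in atTop, ∀ L ∈ Finset.Icc 1 K, ∀ n, 1 ≤ n →
      c n ^ L * (n : ℝ≥0∞) ^ (L / 2) ≤ C * (n : ℝ≥0∞) ^ γ := by
    refine (eventually_all_finset _).2 fun L hLK => ?_
    obtain ⟨hL, hLK⟩ := Finset.mem_Icc.1 hLK
    have hLℓ : (L : ℕ∞) ≤ lstar ℓf := hK ▸ Nat.cast_le.2 hLK
    have hlimsup := not_lt.1 fun hpos => (ofReal_le_gammaStar hγ hL hLℓ hpos).not_gt h
    exact ENNReal.eventually_forall_le_mul_natCast_rpow hγ (fun n hn => hfin n hn L hL hLℓ)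
      (hlimsup.trans_lt ENNReal.zero_lt_top)
  obtain ⟨C, hC, hCpos⟩ := (hbound.and (eventually_gt_atTop 0)).exists
  refine gammaDiamond_le_ofReal hγ (NNReal.coe_pos.2 hCpos) fun n hn L hL hLℓ => ?_
  rw [ENNReal.ofReal_coe_nnreal]
  exact hC L (Finset.mem_Icc.2 ⟨hL, Nat.cast_le.1 (hK ▸ hLℓ)⟩) n hn

lemma gammaDiamond_le_gammaStar (hℓ : lstar ℓf ≠ ⊤)
    (hfin : ∀ n : ℕ, 1 ≤ n → ∀ L : ℕ, 1 ≤ L → (L : ℕ∞) ≤ lstar ℓf →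
      c n ^ L * (n : ℝ≥0∞) ^ (L / 2) ≠ ⊤) :
    gammaDiamond ℓf c ≤ gammaStar ℓf c := by
  refine le_of_forall_gt_imp_ge_of_dense fun t ht => ?_
  rcases eq_or_ne t ⊤ with rfl | htop
  · exact le_top
  rw [← ENNReal.ofReal_toReal htop] at ht ⊢
  exact gammaDiamond_le_of_gammaStar_lt hℓ hfin ENNReal.toReal_nonneg ht

end Exponents

theorem gammaStar_eq_gammaDiamond_general
    (ℓf cf : ℕ → ℕ∞)
    (hcmono : Monotone cf)
    (hc1 : ∀ n, 1 ≤ cf n) :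
    gammaStar ℓf (fun n => (cf n : ℝ≥0∞)) = gammaDiamond ℓf (fun n => (cf n : ℝ≥0∞)) := by
  refine le_antisymm gammaStar_le_gammaDiamond ?_
  by_cases hℓ : lstar ℓf = ⊤
  · exact le_top.trans_eq
      (gammaStar_eq_top_of_lstar_eq_top (fun n => by exact_mod_cast hc1 n) hℓ).symm
  by_cases htop : ∃ n L : ℕ, 1 ≤ L ∧ (L : ℕ∞) ≤ lstar ℓf ∧
      (cf n : ℝ≥0∞) ^ L * (n : ℝ≥0∞) ^ (L / 2) = ⊤
  · obtain ⟨n, L, hL, hLℓ, hnL⟩ := htop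
    exact le_top.trans_eq
      (gammaStar_eq_top_of_eq_top (ENat.toENNReal_mono.comp hcmono) hL hLℓ hnL).symm
  exact gammaDiamond_le_gammaStar hℓ fun n _ L hL hLℓ hnL => htop ⟨n, L, hL, hLℓ, hnL⟩

/-- Lemma 2.2 / `lem:GammaProperties`, first part: the complexity
exponents coincide, `γ*(ℓ,c) = γ◇(ℓ,c)`. -/
theorem gammaStar_eq_gammaDiamond
    (ℓf cf : ℕ → ℕ∞)
    (hℓmono : Monotone ℓf) (hcmono : Monotone cf)
    (hℓ2 : ∀ n, 2 ≤ ℓf n) (hc1 : ∀ n, 1 ≤ cf n) :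
    gammaStar ℓf (fun n => (cf n : ℝ≥0∞)) = gammaDiamond ℓf (fun n => (cf n : ℝ≥0∞)) :=
  gammaStar_eq_gammaDiamond_general ℓf cf hcmono hc1
end

section
/- Let d ∈ ℕ, let ℓ : ℕ → ℕ_{≥2} ∪ {∞} and c : ℕ → [1,∞] be given, and let n ∈ ℕ be such that L := ℓ(n) and C := c(n) are finite. Then every F ∈ Σ_n (i.e., every function F = R_ρΦ realized by a ReLU network Φ with input dimension d, output dimension 1, W(Φ) ≤ n, L(Φ) ≤ L, and ‖Φ‖_NN ≤ C) satisfies Lip(F) ≤ d·C^L·n^{⌊L/2⌋}, where Lip is taken with respect to the ℓ∞ norm on [0,1]^d. -/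
open MeasureTheory Filter
open scoped ENNReal NNReal Classical

/-!
Bound the Lipschitz constant of each neuron recursively: an input coordinate has constant `1`,
and a neuron of layer `k + 1` has at most `∑ⱼ |A k i j|` times the constants of layer `k`
(ReLU is `1`-Lipschitz, and `Fin d → ℝ` carries the sup metric). Going through one layer with
this bound costs a row sum, which can be of order `C · width`; the saving comes from going
through two layers at once: the outer row costs at most `C`, and the full absolute sum of the
inner matrix is at most `C · n` because it has at most `n` nonzero entries. So every pair of
layers contributes `C² n`, and a leftover first layer contributes `C d`.
-/

lemma Matrix.abs_mulVec_sub_mulVec_le {m n : Type*} [Fintype n] (A : Matrix m n ℝ)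
    (u v : n → ℝ) (i : m) :
    |A.mulVec u i - A.mulVec v i| ≤ ∑ j, |A i j| * |u j - v j| := by
  simp only [Matrix.mulVec, dotProduct, ← Finset.sum_sub_distrib, ← mul_sub]
  refine (Finset.abs_sum_le_sum_abs _ _).trans_eq ?_
  simp only [abs_mul]

lemma Matrix.sum_sum_abs_le_card_mul {m n : Type*} [Fintype m] [Fintype n] (A : Matrix m n ℝ)
    {c : ℝ} (hA : ∀ i j, |A i j| ≤ c) :
    ∑ i, ∑ j, |A i j| ≤ (Finset.univ.filter fun ij : m × n => A ij.1 ij.2 ≠ 0).card * c := by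
  rw [← Fintype.sum_prod_type', ← Finset.sum_filter_ne_zero]
  simp only [ne_eq, abs_eq_zero]
  simpa using Finset.sum_le_card_nsmul _ _ c fun ij _ => hA ij.1 ij.2

lemma abs_relu_sub_relu_le (a b : ℝ) : |relu a - relu b| ≤ |a - b| := by
  simpa only [relu, max_comm (0 : ℝ)] using abs_max_sub_max_le_abs a b 0

lemma eLip_one_le_ofReal {d : ℕ} {f : (Fin d → ℝ) → ℝ} {K : ℝ}
    (hf : ∀ x ∈ unitCube d, ∀ y ∈ unitCube d, |f x - f y| ≤ K * dist x y) :
    eLip d 1 f ≤ ENNReal.ofReal K := by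
  refine iSup₂_le fun x hx => iSup₂_le fun y hy => iSup_le fun hxy => ?_
  rw [Real.rpow_one]
  exact ENNReal.ofReal_le_ofReal ((div_le_iff₀ (dist_pos.2 hxy)).2 (hf x hx y hy))

namespace NeuralNet

variable {d : ℕ} (Φ : NeuralNet d)

def lipBound : (k : ℕ) → Fin (Φ.N k) → ℝ
  | 0 => fun _ => 1
  | k + 1 => fun i => ∑ j, |Φ.A k i j| * lipBound k j

lemma lipBound_nonneg : ∀ k i, 0 ≤ Φ.lipBound k i
  | 0, _ => zero_le_one
  | k + 1, _ => Finset.sum_nonneg fun j _ => mul_nonneg (abs_nonneg _) (lipBound_nonneg k j)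

lemma abs_mulVec_hidden_sub_le (x y : Fin d → ℝ) (k : ℕ)
    (hk : ∀ j, |Φ.hidden k x j - Φ.hidden k y j| ≤ Φ.lipBound k j * dist x y)
    (i : Fin (Φ.N (k + 1))) :
    |(Φ.A k).mulVec (Φ.hidden k x) i - (Φ.A k).mulVec (Φ.hidden k y) i| ≤
      Φ.lipBound (k + 1) i * dist x y := by
  refine ((Φ.A k).abs_mulVec_sub_mulVec_le _ _ i).trans ?_
  rw [lipBound, Finset.sum_mul]
  refine Finset.sum_le_sum fun j _ => ?_
  rw [mul_assoc]
  exact mul_le_mul_of_nonneg_left (hk j) (abs_nonneg _)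

lemma abs_hidden_sub_le (x y : Fin d → ℝ) :
    ∀ k i, |Φ.hidden k x i - Φ.hidden k y i| ≤ Φ.lipBound k i * dist x y
  | 0, i => by simpa [hidden, lipBound, Real.dist_eq] using dist_le_pi_dist x y _
  | k + 1, i => by
    refine (abs_relu_sub_relu_le _ _).trans ?_
    rw [add_sub_add_right_eq_sub]
    exact Φ.abs_mulVec_hidden_sub_le x y k (abs_hidden_sub_le x y k) i

lemma abs_realization_sub_le {K : ℝ} (hK : ∀ i, Φ.lipBound Φ.L i ≤ K) (x y : Fin d → ℝ) :
    |Φ.realization x - Φ.realization y| ≤ K * dist x y := by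
  have hK' : ∀ i, Φ.lipBound (Φ.L - 1 + 1) i ≤ K := by
    rw [Nat.sub_add_cancel Φ.hL]
    exact hK
  unfold realization
  rw [Pi.add_apply, Pi.add_apply, add_sub_add_right_eq_sub]
  refine (Φ.abs_mulVec_hidden_sub_le x y _ (Φ.abs_hidden_sub_le x y _) _).trans ?_
  exact mul_le_mul_of_nonneg_right (hK' _) dist_nonneg

lemma card_A_ne_zero_le_weightCount {k : ℕ} (hk : k < Φ.L) :
    (Finset.univ.filter fun ij : Fin (Φ.N (k + 1)) × Fin (Φ.N k) =>
      Φ.A k ij.1 ij.2 ≠ 0).card ≤ Φ.weightCount := by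
  unfold weightCount
  refine le_trans ?_ (Finset.single_le_sum (fun _ _ => Nat.zero_le _) (Finset.mem_range.2 hk))
  exact Nat.le_add_right _ _

lemma sum_sum_abs_A_le {k : ℕ} (hk : k < Φ.L) {n : ℕ} (hW : Φ.weightCount ≤ n) {c : ℝ}
    (hc : 0 ≤ c) (hA : ∀ i j, |Φ.A k i j| ≤ c) :
    ∑ i, ∑ j, |Φ.A k i j| ≤ n * c :=
  ((Φ.A k).sum_sum_abs_le_card_mul hA).trans <| mul_le_mul_of_nonneg_right
    (by exact_mod_cast (Φ.card_A_ne_zero_le_weightCount hk).trans hW) hc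

lemma lipBound_succ_le {k : ℕ} {i : Fin (Φ.N (k + 1))} {c B : ℝ} (hc : 0 ≤ c)
    (hA : ∀ j, |Φ.A k i j| ≤ c) (hB : ∀ j, Φ.lipBound k j ≤ B) :
    Φ.lipBound (k + 1) i ≤ Φ.N k * (c * B) := by
  rw [lipBound]
  refine (Finset.sum_le_sum fun j _ =>
    mul_le_mul (hA j) (hB j) (Φ.lipBound_nonneg k j) hc).trans_eq ?_
  simp

lemma lipBound_add_two_le {k : ℕ} {i : Fin (Φ.N (k + 2))} {c s B : ℝ} (hc : 0 ≤ c)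
    (hB₀ : 0 ≤ B) (hA : ∀ j, |Φ.A (k + 1) i j| ≤ c) (hs : ∑ j, ∑ l, |Φ.A k j l| ≤ s)
    (hB : ∀ l, Φ.lipBound k l ≤ B) :
    Φ.lipBound (k + 2) i ≤ c * (s * B) := calc
  Φ.lipBound (k + 2) i ≤ ∑ j, c * Φ.lipBound (k + 1) j :=
    Finset.sum_le_sum fun j _ =>
      mul_le_mul_of_nonneg_right (hA j) (Φ.lipBound_nonneg _ j)
  _ ≤ c * ∑ j, ∑ l, |Φ.A k j l| * B := by
    rw [← Finset.mul_sum]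
    refine mul_le_mul_of_nonneg_left (Finset.sum_le_sum fun j _ => ?_) hc
    exact Finset.sum_le_sum fun l _ => mul_le_mul_of_nonneg_left (hB l) (abs_nonneg _)
  _ ≤ c * (s * B) := by
    simp_rw [← Finset.sum_mul]
    gcongr

lemma lipBound_le {n : ℕ} (hW : Φ.weightCount ≤ n) {c : ℝ} (hc : 0 ≤ c)
    (hA : ∀ ℓ < Φ.L, ∀ i j, |Φ.A ℓ i j| ≤ c) :
    ∀ k ≤ Φ.L, ∀ i, Φ.lipBound k i ≤ d * c ^ k * n ^ (k / 2) := by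
  intro k
  induction k using Nat.twoStepInduction with
  | zero =>
    intro _ i
    have hd : 0 < d := Φ.hN0 ▸ i.pos
    simpa [lipBound] using (Nat.one_le_cast.2 hd : (1 : ℝ) ≤ d)
  | one =>
    intro hL i
    refine (Φ.lipBound_succ_le (B := 1) hc (hA 0 hL i) fun _ => le_rfl).trans_eq ?_
    rw [Φ.hN0]
    ring
  | more k ih _ =>
    intro hk i
    refine (Φ.lipBound_add_two_le hc (by positivity) (hA (k + 1) hk i)
      (Φ.sum_sum_abs_A_le (by omega) hW hc (hA k (by omega))) (ih (by omega))).trans_eq ?_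
    rw [show (k + 2) / 2 = k / 2 + 1 by omega]
    ring

lemma abs_A_le_of_weightsBoundedBy {C : ℝ≥0∞} (hΦ : Φ.weightsBoundedBy C) (hC : C ≠ ⊤) :
    ∀ ℓ < Φ.L, ∀ i j, |Φ.A ℓ i j| ≤ C.toReal := fun ℓ hℓ i j =>
  (ENNReal.ofReal_le_iff_le_toReal hC).1 ((hΦ ℓ hℓ).1 i j)

end NeuralNet

theorem network_lipschitz_estimate_general
    (d : ℕ) (ℓf : ℕ → ℕ∞) (cf : ℕ → ℝ≥0∞)
    (hc1 : ∀ k, 1 ≤ cf k)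
    (n : ℕ) (hn : 1 ≤ n)
    (L : ℕ) (hL : ℓf n = (L : ℕ∞))
    (C : ℝ≥0∞) (hC : cf n = C) (hCfin : C < ⊤) :
    ∀ F ∈ NNSet d ℓf cf n,
      eLip d 1 F ≤ (d : ℝ≥0∞) * C ^ L * (n : ℝ≥0∞) ^ (L / 2) := by
  rintro F ⟨Φ, rfl, hW, hΦL, hΦC⟩
  subst hC
  have hc : 1 ≤ (cf n).toReal := by simpa using ENNReal.toReal_mono hCfin.ne (hc1 n)
  have hΦL : Φ.L ≤ L := by exact_mod_cast hL ▸ hΦL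
  have hK : ∀ i, Φ.lipBound Φ.L i ≤ d * (cf n).toReal ^ L * n ^ (L / 2) := fun i => by
    refine (Φ.lipBound_le hW (zero_le_one.trans hc)
      (Φ.abs_A_le_of_weightsBoundedBy hΦC hCfin.ne) _ le_rfl i).trans ?_
    gcongr
    exact_mod_cast hn
  calc eLip d 1 Φ.realization ≤ ENNReal.ofReal (d * (cf n).toReal ^ L * n ^ (L / 2)) :=
        eLip_one_le_ofReal fun x _ y _ => Φ.abs_realization_sub_le hK x y
    _ = (d : ℝ≥0∞) * cf n ^ L * (n : ℝ≥0∞) ^ (L / 2) := by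
        rw [ENNReal.ofReal_mul (by positivity), ENNReal.ofReal_mul (by positivity),
          ENNReal.ofReal_pow ENNReal.toReal_nonneg, ENNReal.ofReal_pow (Nat.cast_nonneg n),
          ENNReal.ofReal_natCast, ENNReal.ofReal_natCast, ENNReal.ofReal_toReal hCfin.ne]

/-- Lemma 3.3 / `lem:NetworkLipschitzEstimate`: if `L := ℓ(n)` and
`C := c(n)` are finite, then every `F ∈ Σ_n` satisfies `Lip(F) ≤ d·C^L·n^{⌊L/2⌋}`
(Lipschitz constant with respect to the `ℓ∞` norm on `[0,1]^d`). -/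
theorem network_lipschitz_estimate
    (d : ℕ) (hd : 0 < d) (ℓf : ℕ → ℕ∞) (cf : ℕ → ℝ≥0∞)
    (hℓ2 : ∀ k, 2 ≤ ℓf k) (hc1 : ∀ k, 1 ≤ cf k)
    (n : ℕ) (hn : 1 ≤ n)
    (L : ℕ) (hL : ℓf n = (L : ℕ∞))
    (C : ℝ≥0∞) (hC : cf n = C) (hCfin : C < ⊤) :
    ∀ F ∈ NNSet d ℓf cf n,
      eLip d 1 F ≤ (d : ℝ≥0∞) * C ^ L * (n : ℝ≥0∞) ^ (L / 2) :=
  network_lipschitz_estimate_general d ℓf cf hc1 n hn L hL C hC hCfin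
end

section
/- Let p ∈ (0,∞], β ∈ (0,1), and d ∈ ℕ. There exists a constant C = C(d,p,β) > 0 such that for every T ∈ (0,1] and every Lipschitz continuous function f : [0,1]^d → ℝ, one has Lip_β(f) ≤ C·(T^{−d/p − β}·‖f‖_{L^p([0,1]^d)} + T^{1−β}·Lip(f)), where d/p = 0 when p = ∞. -/
open MeasureTheory Filter
open scoped ENNReal NNReal Classical

/-! A value `|f x₀|` of a `K`-Lipschitz function persists, up to `K T`, on a subcube of side `T`
containing `x₀`, hence `(|f x₀| - K T) T^{d/p} ≤ ‖f‖_{L^p}`. So `|f| ≤ T^{-d/p} ‖f‖_{L^p} + K T`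
on `[0,1]^d`. For `Lip_β`, pairs of points at distance at most `T` are handled by the Lipschitz
bound, pairs at distance more than `T` by this sup bound. -/

theorem ofReal_rpow_mul_ofReal_rpow {T : ℝ} (hT : 0 < T) (a b : ℝ) :
    ENNReal.ofReal (T ^ a) * ENNReal.ofReal (T ^ b) = ENNReal.ofReal (T ^ (a + b)) := by
  rw [← ENNReal.ofReal_mul (Real.rpow_nonneg hT.le a), Real.rpow_add hT]

theorem ofReal_pow_rpow_one_div_toReal {T : ℝ} (hT : 0 < T) (d : ℕ) (p : ℝ≥0∞) :
    (ENNReal.ofReal T ^ d) ^ (1 / p.toReal) = ENNReal.ofReal (T ^ dOverP d p) := by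
  rw [← ENNReal.ofReal_pow hT.le, ENNReal.ofReal_rpow_of_pos (pow_pos hT d),
    ← Real.rpow_natCast, ← Real.rpow_mul hT.le]
  congr 2
  unfold dOverP
  split_ifs with hp
  · simp [hp]
  · rw [mul_one_div]

theorem ofReal_mul_measure_rpow_le_eLpNorm {α : Type*} [MeasurableSpace α] {μ : Measure α}
    {f : α → ℝ} {s : Set α} {c : ℝ} {p : ℝ≥0∞} (hs : MeasurableSet s) (hμs : μ s ≠ 0)
    (hp : p ≠ 0) (hc : ∀ x ∈ s, c ≤ |f x|) :
    ENNReal.ofReal c * μ s ^ (1 / p.toReal) ≤ eLpNorm f p μ := by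
  rcases le_or_gt c 0 with hc0 | hc0
  · simp [ENNReal.ofReal_of_nonpos hc0]
  calc ENNReal.ofReal c * μ s ^ (1 / p.toReal)
      = eLpNorm (s.indicator fun _ => c) p μ := by
        rw [eLpNorm_indicator_const' hs hμs hp, Real.enorm_eq_ofReal hc0.le]
    _ ≤ eLpNorm f p μ := by
        refine eLpNorm_mono fun x => ?_
        by_cases hx : x ∈ s
        · simpa [hx, abs_of_pos hc0] using hc x hx
        · simp [hx]

section UnitCube

variable {d : ℕ} {f : (Fin d → ℝ) → ℝ} {K : ℝ≥0} {T : ℝ}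

theorem exists_Icc_subset_unitCube {x₀ : Fin d → ℝ} (hx₀ : x₀ ∈ unitCube d)
    (hT0 : 0 ≤ T) (hT1 : T ≤ 1) :
    ∃ a : Fin d → ℝ, x₀ ∈ Set.Icc a (a + fun _ => T) ∧
      Set.Icc a (a + fun _ => T) ⊆ unitCube d := by
  refine ⟨fun j => min (x₀ j) (1 - T), ⟨fun j => ?_, fun j => ?_⟩,
    fun z hz => ⟨fun j => ?_, fun j => ?_⟩⟩ <;>
  have h0 : 0 ≤ x₀ j := hx₀.1 j <;> have h1 : x₀ j ≤ 1 := hx₀.2 j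
  · exact min_le_left _ _
  · exact sub_le_iff_le_add.mp (le_min (by linarith) (by linarith))
  · exact (le_min h0 (by linarith)).trans (hz.1 j)
  · have := min_le_right (x₀ j) (1 - T)
    exact (hz.2 j).trans (by simp only [Pi.add_apply, Pi.one_apply]; linarith)

theorem ofReal_sub_mul_rpow_le_eLpNorm (hf : LipschitzOnWith K f (unitCube d))
    {x₀ : Fin d → ℝ} (hx₀ : x₀ ∈ unitCube d) (hT0 : 0 < T) (hT1 : T ≤ 1) {p : ℝ≥0∞}
    (hp : p ≠ 0) :
    ENNReal.ofReal (|f x₀| - K * T) * ENNReal.ofReal (T ^ dOverP d p) ≤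
      eLpNorm f p (volume.restrict (unitCube d)) := by
  obtain ⟨a, hx₀Q, hQ⟩ := exists_Icc_subset_unitCube hx₀ hT0.le hT1
  have hvol : volume.restrict (unitCube d) (Set.Icc a (a + fun _ => T)) =
      ENNReal.ofReal T ^ d := by
    rw [Measure.restrict_apply measurableSet_Icc, Set.inter_eq_left.mpr hQ, Real.volume_Icc_pi]
    simp
  have hbound : ∀ z ∈ Set.Icc a (a + fun _ => T), |f x₀| - K * T ≤ |f z| := by
    intro z hz
    have hdist : dist x₀ z ≤ T := (Real.dist_le_of_mem_pi_Icc hx₀Q hz).trans <|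
      (dist_pi_le_iff hT0.le).mpr fun j => by simp [abs_of_nonneg hT0.le]
    have := (hf.dist_le_mul x₀ hx₀ z (hQ hz)).trans (mul_le_mul_of_nonneg_left hdist K.2)
    rw [Real.dist_eq] at this
    linarith [abs_sub_abs_le_abs_sub (f x₀) (f z)]
  calc ENNReal.ofReal (|f x₀| - K * T) * ENNReal.ofReal (T ^ dOverP d p)
      = ENNReal.ofReal (|f x₀| - K * T) *
          volume.restrict (unitCube d) (Set.Icc a (a + fun _ => T)) ^ (1 / p.toReal) := by
        rw [hvol, ofReal_pow_rpow_one_div_toReal hT0]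
    _ ≤ eLpNorm f p (volume.restrict (unitCube d)) :=
        ofReal_mul_measure_rpow_le_eLpNorm measurableSet_Icc
          (by simp [hvol, hT0]) hp hbound

theorem ofReal_abs_le_eLpNorm_add (hf : LipschitzOnWith K f (unitCube d))
    {x₀ : Fin d → ℝ} (hx₀ : x₀ ∈ unitCube d) (hT0 : 0 < T) (hT1 : T ≤ 1) {p : ℝ≥0∞}
    (hp : p ≠ 0) :
    ENNReal.ofReal |f x₀| ≤ ENNReal.ofReal (T ^ (-dOverP d p)) *
      eLpNorm f p (volume.restrict (unitCube d)) + ENNReal.ofReal T * K := by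
  have hcancel : ENNReal.ofReal (T ^ (-dOverP d p)) * ENNReal.ofReal (T ^ dOverP d p) = 1 := by
    simp [ofReal_rpow_mul_ofReal_rpow hT0]
  calc ENNReal.ofReal |f x₀| = ENNReal.ofReal ((|f x₀| - K * T) + K * T) := by ring_nf
    _ ≤ ENNReal.ofReal (|f x₀| - K * T) + ENNReal.ofReal (K * T) := ENNReal.ofReal_add_le
    _ = ENNReal.ofReal (T ^ (-dOverP d p)) *
          (ENNReal.ofReal (|f x₀| - K * T) * ENNReal.ofReal (T ^ dOverP d p)) +
          ENNReal.ofReal T * K := by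
        rw [ENNReal.ofReal_mul K.coe_nonneg, ENNReal.ofReal_coe_nnreal, mul_comm (K : ℝ≥0∞),
          mul_left_comm, hcancel, mul_one]
    _ ≤ _ := by gcongr; exact ofReal_sub_mul_rpow_le_eLpNorm hf hx₀ hT0 hT1 hp

theorem le_eLip {β : ℝ} {x y : Fin d → ℝ} (hx : x ∈ unitCube d) (hy : y ∈ unitCube d)
    (hxy : x ≠ y) : ENNReal.ofReal (|f x - f y| / dist x y ^ β) ≤ eLip d β f :=
  le_iSup₂_of_le x hx <| le_iSup₂_of_le y hy <| le_iSup_of_le hxy le_rfl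

theorem eLip_le {β : ℝ} {c : ℝ≥0∞}
    (h : ∀ x ∈ unitCube d, ∀ y ∈ unitCube d, x ≠ y →
      ENNReal.ofReal (|f x - f y| / dist x y ^ β) ≤ c) :
    eLip d β f ≤ c :=
  iSup₂_le fun x hx => iSup₂_le fun y hy => iSup_le (h x hx y hy)

theorem lipschitzOnWith_of_eLip_one_le (h : eLip d 1 f ≤ K) :
    LipschitzOnWith K f (unitCube d) := by
  refine LipschitzOnWith.of_dist_le_mul fun x hx y hy => ?_
  rcases eq_or_ne x y with rfl | hxy
  · simp
  have hquot := (le_eLip hx hy hxy).trans h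
  rw [Real.rpow_one, ← ENNReal.ofReal_coe_nnreal, ENNReal.ofReal_le_ofReal_iff K.coe_nonneg,
    div_le_iff₀ (dist_pos.mpr hxy)] at hquot
  rwa [Real.dist_eq]

theorem ofReal_div_rpow_le_of_dist_le (hf : LipschitzOnWith K f (unitCube d)) {β : ℝ}
    (hβ1 : β ≤ 1) {x y : Fin d → ℝ} (hx : x ∈ unitCube d) (hy : y ∈ unitCube d) (hxy : x ≠ y)
    (hnear : dist x y ≤ T) :
    ENNReal.ofReal (|f x - f y| / dist x y ^ β) ≤ ENNReal.ofReal (T ^ (1 - β)) * K := by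
  have hD : 0 < dist x y := dist_pos.mpr hxy
  have hreal : |f x - f y| / dist x y ^ β ≤ T ^ (1 - β) * K :=
    calc |f x - f y| / dist x y ^ β ≤ K * dist x y / dist x y ^ β := by
          gcongr
          simpa [Real.dist_eq] using hf.dist_le_mul x hx y hy
      _ = dist x y ^ (1 - β) * K := by
          rw [Real.rpow_sub hD, Real.rpow_one]
          ring
      _ ≤ T ^ (1 - β) * K := by gcongr
  calc ENNReal.ofReal (|f x - f y| / dist x y ^ β) ≤ ENNReal.ofReal (T ^ (1 - β) * K) :=
        ENNReal.ofReal_le_ofReal hreal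
    _ = ENNReal.ofReal (T ^ (1 - β)) * K := by
        rw [ENNReal.ofReal_mul (Real.rpow_nonneg (hD.le.trans hnear) _),
          ENNReal.ofReal_coe_nnreal]

theorem ofReal_div_rpow_le_of_le_dist (hf : LipschitzOnWith K f (unitCube d)) {β : ℝ}
    (hβ0 : 0 ≤ β) {x y : Fin d → ℝ} (hx : x ∈ unitCube d) (hy : y ∈ unitCube d)
    (hT0 : 0 < T) (hT1 : T ≤ 1) {p : ℝ≥0∞} (hp : p ≠ 0) (hfar : T ≤ dist x y) :
    ENNReal.ofReal (|f x - f y| / dist x y ^ β) ≤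
      2 * (ENNReal.ofReal (T ^ (-dOverP d p - β)) * eLpNorm f p (volume.restrict (unitCube d))
        + ENNReal.ofReal (T ^ (1 - β)) * K) := by
  have hreal : |f x - f y| / dist x y ^ β ≤ T ^ (-β) * (|f x| + |f y|) := by
    rw [Real.rpow_neg hT0.le, ← div_eq_inv_mul]
    gcongr
    exact abs_sub _ _
  calc ENNReal.ofReal (|f x - f y| / dist x y ^ β)
      ≤ ENNReal.ofReal (T ^ (-β)) * (ENNReal.ofReal |f x| + ENNReal.ofReal |f y|) := by
        rw [← ENNReal.ofReal_add (abs_nonneg _) (abs_nonneg _),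
          ← ENNReal.ofReal_mul (Real.rpow_nonneg hT0.le _)]
        exact ENNReal.ofReal_le_ofReal hreal
    _ ≤ ENNReal.ofReal (T ^ (-β)) * (2 * (ENNReal.ofReal (T ^ (-dOverP d p)) *
          eLpNorm f p (volume.restrict (unitCube d)) + ENNReal.ofReal T * K)) := by
        rw [two_mul]
        gcongr
        exacts [ofReal_abs_le_eLpNorm_add hf hx hT0 hT1 hp,
          ofReal_abs_le_eLpNorm_add hf hy hT0 hT1 hp]
    _ = 2 * (ENNReal.ofReal (T ^ (-β)) * ENNReal.ofReal (T ^ (-dOverP d p)) *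
          eLpNorm f p (volume.restrict (unitCube d)) +
          ENNReal.ofReal (T ^ (-β)) * ENNReal.ofReal (T ^ (1 : ℝ)) * K) := by
        rw [Real.rpow_one]
        ring
    _ = _ := by
        rw [ofReal_rpow_mul_ofReal_rpow hT0, ofReal_rpow_mul_ofReal_rpow hT0, neg_add_eq_sub,
          neg_add_eq_sub]

end UnitCube

theorem holder_le_Lp_add_lipschitz_general
    (d : ℕ) (p : ℝ≥0∞) (hp : 0 < p) (β : ℝ) (hβ0 : 0 < β) (hβ1 : β < 1) :
    ∃ C : ℝ, 0 < C ∧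
      ∀ T : ℝ, 0 < T → T ≤ 1 →
        ∀ f : (Fin d → ℝ) → ℝ, eLip d 1 f < ⊤ →
          eLip d β f ≤ ENNReal.ofReal C *
            (ENNReal.ofReal (T ^ (-(dOverP d p) - β))
                * eLpNorm f p (volume.restrict (unitCube d))
              + ENNReal.ofReal (T ^ (1 - β)) * eLip d 1 f) := by
  refine ⟨2, two_pos, fun T hT0 hT1 f hf => ?_⟩
  lift eLip d 1 f to ℝ≥0 using hf.ne with K hK
  have hlip : LipschitzOnWith K f (unitCube d) := lipschitzOnWith_of_eLip_one_le hK.ge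
  rw [ENNReal.ofReal_ofNat]
  refine eLip_le fun x hx y hy hxy => ?_
  rcases le_or_gt (dist x y) T with hnear | hfar
  · calc ENNReal.ofReal (|f x - f y| / dist x y ^ β) ≤ ENNReal.ofReal (T ^ (1 - β)) * K :=
          ofReal_div_rpow_le_of_dist_le hlip hβ1.le hx hy hxy hnear
      _ ≤ 2 * (ENNReal.ofReal (T ^ (-dOverP d p - β)) *
            eLpNorm f p (volume.restrict (unitCube d)) + ENNReal.ofReal (T ^ (1 - β)) * K) :=
          le_add_self.trans (le_mul_of_one_le_left' one_le_two)
  · exact ofReal_div_rpow_le_of_le_dist hlip hβ0.le hx hy hT0 hT1 hp.ne' hfar.le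

/-- Lemma 3.4 / `lem:HoelderConstantBound`: there is `C = C(d,p,β) > 0`
such that for all `T ∈ (0,1]` and all Lipschitz `f : [0,1]^d → ℝ`,
`Lip_β(f) ≤ C·(T^{−d/p−β}·‖f‖_{L^p} + T^{1−β}·Lip(f))`, with `d/p = 0` when `p = ∞`. -/
theorem holder_le_Lp_add_lipschitz
    (d : ℕ) (hd : 0 < d) (p : ℝ≥0∞) (hp : 0 < p) (β : ℝ) (hβ0 : 0 < β) (hβ1 : β < 1) :
    ∃ C : ℝ, 0 < C ∧
      ∀ T : ℝ, 0 < T → T ≤ 1 →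
        ∀ f : (Fin d → ℝ) → ℝ, eLip d 1 f < ⊤ →
          eLip d β f ≤ ENNReal.ofReal C *
            (ENNReal.ofReal (T ^ (-(dOverP d p) - β))
                * eLpNorm f p (volume.restrict (unitCube d))
              + ENNReal.ofReal (T ^ (1 - β)) * eLip d 1 f) :=
  holder_le_Lp_add_lipschitz_general d p hp β hβ0 hβ1
end

section
/- Let d ∈ ℕ and let ℓ : ℕ → ℕ_{≥2} ∪ {∞} and c : ℕ → ℕ ∪ {∞} be non-decreasing. Let n ∈ ℕ, let C be a real number with 0 ≤ C ≤ c(n), let L ∈ ℕ with L ≥ 2 and L ≤ ℓ(n), let M' ≥ 1, and let M be a real number with 0 ≤ M ≤ C^L·n^{⌊L/2⌋}. Then the function (M/M')·ζ_{M'}, where ζ_{M'}(x) = max{0, 1 − M'·Σ_{i=1}^d x_i}, belongs to Σ_{(d+L)·n}; that is, it equals the realization of a ReLU network Φ with input dimension d, output dimension 1, W(Φ) ≤ (d+L)·n, L(Φ) ≤ ℓ((d+L)·n), and ‖Φ‖_NN ≤ c((d+L)·n). -/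
open MeasureTheory Filter
open scoped ENNReal NNReal Classical

/-!
Take the depth-`L` network whose first layer has all weights `-a` and all biases `a / M'`, whose
later layers have all weights `a` and no biases, and whose hidden widths alternate
`n, 1, n, 1, …`. Every neuron of layer `k` then carries
`a ^ k * n ^ ⌊k / 2⌋ * max 0 (1 / M' - ∑ i, x i)`: the single neuron of a width-`1` layer is
copied `n` times and the next layer sums the copies. Hence the network computes
`(M / M') * ζ_{M'}` once `a ^ L * n ^ ⌊L / 2⌋ = M`, and `M ≤ C ^ L * n ^ ⌊L / 2⌋` lets us take
`a ≤ C`. The first layer has `(d + 1) * n` weights and each of the other `L - 1` layers has at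
most `n`.
-/

open Finset

theorem prod_range_ite_even {M : Type*} [CommMonoid M] (x : M) (m : ℕ) :
    ∏ j ∈ range m, (if Even j then x else 1) = x ^ ((m + 1) / 2) := by
  induction m with
  | zero => simp
  | succ m ih =>
    rw [prod_range_succ, ih]
    rcases Nat.even_or_odd' m with ⟨k, rfl | rfl⟩
    · rw [if_pos (even_two_mul k), ← pow_succ]; congr 1; omega
    · rw [if_neg (by simp), mul_one]; congr 1; omega

theorem relu_mul_of_nonneg {a : ℝ} (ha : 0 ≤ a) (t : ℝ) : relu (a * t) = a * relu t := by
  simp only [relu, mul_max_of_nonneg _ _ ha, mul_zero]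

theorem relu_of_nonneg {t : ℝ} (ht : 0 ≤ t) : relu t = t := max_eq_right ht

theorem relu_nonneg (t : ℝ) : 0 ≤ relu t := le_max_left _ _

theorem div_mul_zeta_eq_mul_relu {M' : ℝ} (hM' : 0 < M') (M : ℝ) (d : ℕ) (x : Fin d → ℝ) :
    M / M' * zeta d M' x = M * relu (1 / M' - ∑ i, x i) := by
  have : 1 / M' - ∑ i, x i = M'⁻¹ * (1 - M' * ∑ i, x i) := by field_simp
  rw [this, relu_mul_of_nonneg (inv_nonneg.2 hM'.le), div_eq_mul_inv, mul_assoc]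
  rfl

theorem exists_nonneg_le_pow_mul_eq {C K M : ℝ} {L : ℕ} (hL : L ≠ 0) (hC : 0 ≤ C) (hK : 0 ≤ K)
    (hM0 : 0 ≤ M) (hM : M ≤ C ^ L * K) : ∃ a, 0 ≤ a ∧ a ≤ C ∧ a ^ L * K = M := by
  rcases hK.eq_or_lt with rfl | hK
  · exact ⟨0, le_rfl, hC, by simp only [mul_zero] at hM ⊢; linarith⟩
  have hq : 0 ≤ M / K := div_nonneg hM0 hK.le
  refine ⟨(M / K) ^ (L : ℝ)⁻¹, by positivity, ?_, ?_⟩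
  · calc (M / K) ^ (L : ℝ)⁻¹ ≤ (C ^ L) ^ (L : ℝ)⁻¹ :=
          Real.rpow_le_rpow hq ((div_le_iff₀ hK).2 hM) (by positivity)
      _ = C := Real.pow_rpow_inv_natCast hC hL
  · rw [Real.rpow_inv_natCast_pow hq hL, div_mul_cancel₀ _ hK.ne']

namespace NeuralNet

variable {d : ℕ}

def hingeNet (L : ℕ) (hL : 0 < L) (N : ℕ → ℕ) (hN0 : N 0 = d) (hNL : N L = 1) (a t : ℝ) :
    NeuralNet d where
  L := L
  hL := hL
  N := N
  hN0 := hN0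
  hNL := hNL
  A ℓ _ _ := if ℓ = 0 then -a else a
  b ℓ _ := if ℓ = 0 then a * t else 0

variable {L : ℕ} {hL : 0 < L} {N : ℕ → ℕ} {hN0 : N 0 = d} {hNL : N L = 1} {a t : ℝ}

theorem hingeNet_hidden_succ (ha : 0 ≤ a) (x : Fin d → ℝ) (k : ℕ) (i : Fin (N (k + 1))) :
    (hingeNet L hL N hN0 hNL a t).hidden (k + 1) x i =
      a ^ (k + 1) * (∏ j ∈ range k, (N (j + 1) : ℝ)) * relu (t - ∑ i, x i) := by
  induction k with
  | zero =>
    have hsum : ∑ j : Fin (N 0), x (Fin.cast hN0 j) = ∑ i, x i :=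
      (finCongr hN0).sum_comp x
    change relu (∑ j : Fin (N 0), -a * x (Fin.cast hN0 j) + a * t) = _
    rw [← mul_sum, hsum, show -a * ∑ i, x i + a * t = a * (t - ∑ i, x i) by ring,
      relu_mul_of_nonneg ha, prod_range_zero, zero_add, pow_one, mul_one]
  | succ k ih =>
    change relu (∑ j : Fin (N (k + 1)), a * (hingeNet L hL N hN0 hNL a t).hidden (k + 1) x j
      + 0) = _
    simp only [ih, sum_const, card_univ, Fintype.card_fin, nsmul_eq_mul, add_zero]
    rw [relu_of_nonneg (by positivity [relu_nonneg (t - ∑ i, x i)]), prod_range_succ]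
    ring

theorem hingeNet_realization (ha : 0 ≤ a) (hL2 : 2 ≤ L) (x : Fin d → ℝ) :
    (hingeNet L hL N hN0 hNL a t).realization x =
      a ^ L * (∏ j ∈ range (L - 1), (N (j + 1) : ℝ)) * relu (t - ∑ i, x i) := by
  obtain ⟨m, rfl⟩ : ∃ m, L = m + 2 := ⟨L - 2, by omega⟩
  change ∑ j : Fin (N (m + 1)), a * (hingeNet (m + 2) hL N hN0 hNL a t).hidden (m + 1) x j
    + 0 = _
  simp only [hingeNet_hidden_succ ha, sum_const, card_univ, Fintype.card_fin, nsmul_eq_mul,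
    add_zero]
  rw [show m + 2 - 1 = m + 1 from rfl, prod_range_succ]
  ring

theorem hingeNet_weightCount_le :
    (hingeNet L hL N hN0 hNL a t).weightCount ≤ N 1 + ∑ ℓ ∈ range L, N (ℓ + 1) * N ℓ := by
  have hA (ℓ : ℕ) : #{ij : Fin (N (ℓ + 1)) × Fin (N ℓ) |
      (hingeNet L hL N hN0 hNL a t).A ℓ ij.1 ij.2 ≠ 0} ≤ N (ℓ + 1) * N ℓ :=
    (card_filter_le _ _).trans (by simp)
  have hb (ℓ : ℕ) : #{i : Fin (N (ℓ + 1)) | (hingeNet L hL N hN0 hNL a t).b ℓ i ≠ 0} ≤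
      if ℓ = 0 then N 1 else 0 := by
    split_ifs with hℓ
    · subst hℓ
      exact (card_filter_le _ _).trans (by simp)
    · simp [hingeNet, hℓ]
  calc _ ≤ ∑ ℓ ∈ range L, (N (ℓ + 1) * N ℓ + if ℓ = 0 then N 1 else 0) :=
        sum_le_sum fun ℓ _ => add_le_add (hA ℓ) (hb ℓ)
    _ = _ := by rw [sum_add_distrib, sum_ite_eq', if_pos (mem_range.2 hL), add_comm]

theorem hingeNet_weightsBoundedBy (ha : 0 ≤ a) (ht : |t| ≤ 1) {c : ℝ≥0∞}
    (hc : ENNReal.ofReal a ≤ c) : (hingeNet L hL N hN0 hNL a t).weightsBoundedBy c := by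
  refine fun ℓ _ => ⟨fun i j => (ENNReal.ofReal_le_ofReal ?_).trans hc,
    fun i => (ENNReal.ofReal_le_ofReal ?_).trans hc⟩
  · change |if ℓ = 0 then -a else a| ≤ a
    split_ifs <;> simp [abs_of_nonneg ha]
  · change |if ℓ = 0 then a * t else 0| ≤ a
    split_ifs
    · rw [abs_mul, abs_of_nonneg ha]
      exact mul_le_of_le_one_right ha ht
    · simpa using ha

end NeuralNet

def altWidths (d n L k : ℕ) : ℕ := if k = 0 then d else if Odd k ∧ k < L then n else 1

section altWidths

variable {d n L : ℕ}

theorem altWidths_zero : altWidths d n L 0 = d := rfl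

theorem altWidths_self (hL : 0 < L) : altWidths d n L L = 1 := by
  simp [altWidths, hL.ne']

theorem prod_altWidths :
    ∏ j ∈ range (L - 1), (altWidths d n L (j + 1) : ℝ) = n ^ (L / 2) := by
  have h (j : ℕ) (hj : j ∈ range (L - 1)) :
      (altWidths d n L (j + 1) : ℝ) = if Even j then (n : ℝ) else 1 := by
    have : j + 1 < L := by rw [mem_range] at hj; omega
    simp [altWidths, Nat.odd_add_one, this]
  rw [prod_congr rfl h, prod_range_ite_even]
  congr 1
  omega

theorem altWidths_succ_mul_le (hn : 1 ≤ n) {k : ℕ} (hk : k ≠ 0) :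
    altWidths d n L (k + 1) * altWidths d n L k ≤ n := by
  simp only [altWidths, hk, Nat.add_one_ne_zero, if_false]
  split_ifs with h₁ h₂ h₂
  · exact absurd h₂.1 (Nat.odd_add_one.1 h₁.1)
  all_goals simp [hn]

theorem altWidths_one_add_sum_mul_le (hn : 1 ≤ n) (hL : 2 ≤ L) :
    altWidths d n L 1 + ∑ ℓ ∈ range L, altWidths d n L (ℓ + 1) * altWidths d n L ℓ ≤
      (d + L) * n := by
  obtain ⟨m, rfl⟩ : ∃ m, L = m + 1 := ⟨L - 1, by omega⟩
  have h1 : altWidths d n (m + 1) 1 = n := by simp [altWidths, show 1 < m + 1 by omega]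
  have hsum : ∑ ℓ ∈ range m, altWidths d n (m + 1) (ℓ + 1 + 1) * altWidths d n (m + 1) (ℓ + 1) ≤
      m * n := by
    simpa using
      sum_le_sum fun ℓ (_ : ℓ ∈ range m) => altWidths_succ_mul_le hn ℓ.succ_ne_zero
  rw [sum_range_succ', h1, altWidths_zero]
  linarith

end altWidths

theorem scaled_zeta_mem_NNSet_general
    (d : ℕ) (ℓf cf : ℕ → ℕ∞)
    (hℓmono : Monotone ℓf) (hcmono : Monotone cf)
    (n : ℕ) (hn : 1 ≤ n)
    (C : ℝ) (hC0 : 0 ≤ C) (hCle : ENNReal.ofReal C ≤ (cf n : ℝ≥0∞))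
    (L : ℕ) (hL2 : 2 ≤ L) (hLle : (L : ℕ∞) ≤ ℓf n)
    (M' : ℝ) (hM' : 1 ≤ M')
    (M : ℝ) (hM0 : 0 ≤ M) (hM : M ≤ C ^ L * (n : ℝ) ^ (L / 2)) :
    (fun x => M / M' * zeta d M' x) ∈
      NNSet d ℓf (fun k => (cf k : ℝ≥0∞)) ((d + L) * n) := by
  obtain ⟨a, ha0, haC, haM⟩ :=
    exists_nonneg_le_pow_mul_eq (by omega) hC0 (by positivity) hM0 hM
  have hL0 : 0 < L := by omega
  have hM'0 : 0 < M' := by linarith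
  have hn_le : n ≤ (d + L) * n := Nat.le_mul_of_pos_left n (by omega)
  refine ⟨NeuralNet.hingeNet L hL0 (altWidths d n L) altWidths_zero (altWidths_self hL0)
    a (1 / M'), ?_, ?_, ?_, ?_⟩
  · funext x
    rw [NeuralNet.hingeNet_realization ha0 hL2, prod_altWidths, haM, div_mul_zeta_eq_mul_relu hM'0]
  · exact NeuralNet.hingeNet_weightCount_le.trans (altWidths_one_add_sum_mul_le hn hL2)
  · exact hLle.trans (hℓmono hn_le)
  · refine NeuralNet.hingeNet_weightsBoundedBy ha0 ?_ ?_
    · rw [abs_of_pos (by positivity)]; exact div_le_one_of_le₀ hM' hM'0.le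
    · exact (ENNReal.ofReal_le_ofReal haC).trans
        (hCle.trans (ENat.toENNReal_le.2 (hcmono hn_le)))

/-- Step 1 in the proof of Theorem 3.6: if `0 ≤ C ≤ c(n)`,
`2 ≤ L ≤ ℓ(n)`, `M' ≥ 1` and `0 ≤ M ≤ C^L·n^{⌊L/2⌋}`, then
`(M/M')·ζ_{M'} ∈ Σ_{(d+L)·n}`. -/
theorem scaled_zeta_mem_NNSet
    (d : ℕ) (hd : 0 < d) (ℓf cf : ℕ → ℕ∞)
    (hℓmono : Monotone ℓf) (hcmono : Monotone cf)
    (hℓ2 : ∀ k, 2 ≤ ℓf k) (hc1 : ∀ k, 1 ≤ cf k)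
    (n : ℕ) (hn : 1 ≤ n)
    (C : ℝ) (hC0 : 0 ≤ C) (hCle : ENNReal.ofReal C ≤ (cf n : ℝ≥0∞))
    (L : ℕ) (hL2 : 2 ≤ L) (hLle : (L : ℕ∞) ≤ ℓf n)
    (M' : ℝ) (hM' : 1 ≤ M')
    (M : ℝ) (hM0 : 0 ≤ M) (hM : M ≤ C ^ L * (n : ℝ) ^ (L / 2)) :
    (fun x => M / M' * zeta d M' x) ∈
      NNSet d ℓf (fun k => (cf k : ℝ≥0∞)) ((d + L) * n) :=
  scaled_zeta_mem_NNSet_general d ℓf cf hℓmono hcmono n hn C hC0 hCle L hL2 hLle M' hM' M hM0 hM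
end
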